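/- arXiv:2007.15415 — 6 statements merged into one kernel-verified Lean document; each statement's English description precedes it below -/
import Mathlib

section
/- Rasiowa–Sikorski Lemma: let B be a Boolean algebra, a ∈ B a nonzero element, and (A_n)_{n∈ℕ} a countable family of subsets of B each of which has a supremum in B. Then there exists an ultrafilter U on B with a ∈ U such that for every n, if sup A_n ∈ U then A_n ∩ U ≠ ∅. -/
/-!
Force with the nonzero elements of `B`. For each `n`, the elements lying below `(s n)ᶜ` or below
some member of `A n` are dense: if `x ≤ s n` were disjoint from every member of `A n`, then `xᶜ`
would bound `A n`, so `x ≤ xᶜ` and `x = ⊥`. The countable Rasiowa–Sikorski construction for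
preorders yields a filter through `a` meeting all these dense sets; it avoids `⊥`, so the prime
ideal theorem extends it to an ultrafilter. The generic element for `n` lies in the ultrafilter,
so when `s n` does too it cannot lie below `(s n)ᶜ` and hence lies below a member of `A n`.
-/

/-- An ultrafilter on a Boolean algebra `B`. -/
def IsUltrafilterSet {B : Type*} [BooleanAlgebra B] (F : Set B) : Prop :=
  ⊤ ∈ F ∧ ⊥ ∉ F ∧ (∀ a b : B, a ∈ F → a ≤ b → b ∈ F) ∧
    (∀ a b : B, a ∈ F → b ∈ F → a ⊓ b ∈ F) ∧ (∀ a : B, a ∈ F ∨ aᶜ ∈ F)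

open Order OrderDual

section

variable {B : Type*} [BooleanAlgebra B]

theorem isUltrafilterSet_compl_of_isPrime {J : Ideal B} (hJ : J.IsPrime) :
    IsUltrafilterSet (J : Set B)ᶜ := by
  refine ⟨hJ.top_notMem, fun h => h J.bot_mem, fun x y hx hxy hy => hx (J.lower hxy hy),
    fun x y hx hy hxy => (hJ.mem_or_mem hxy).elim hx hy, fun x => ?_⟩
  by_contra! h
  simp only [Set.mem_compl_iff, not_not, SetLike.mem_coe] at h
  exact hJ.top_notMem (by simpa using J.sup_mem h.1 h.2)

theorem IsLUB.exists_ne_bot_le_and_decides {A : Set B} {s x : B} (hs : IsLUB A s)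
    (hx : x ≠ ⊥) : ∃ y ≠ ⊥, y ≤ x ∧ (y ≤ sᶜ ∨ ∃ b ∈ A, y ≤ b) := by
  by_cases hxs : x ⊓ sᶜ = ⊥
  · have hle : x ≤ s := by rwa [← sdiff_eq, sdiff_eq_bot_iff] at hxs
    obtain ⟨b, hb, hxb⟩ : ∃ b ∈ A, x ⊓ b ≠ ⊥ := by
      by_contra! h
      have hsx : s ≤ xᶜ := hs.2 fun b hb => le_compl_iff_disjoint_left.2 (disjoint_iff.2 (h b hb))
      exact hx (le_compl_self.1 (hle.trans hsx))
    exact ⟨x ⊓ b, hxb, inf_le_left, .inr ⟨b, hb, inf_le_right⟩⟩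
  · exact ⟨x ⊓ sᶜ, hxs, inf_le_left, .inl inf_le_right⟩

def decidingCofinal {A : Set B} {s : B} (hs : IsLUB A s) : Cofinal {x : B // x ≠ ⊥}ᵒᵈ where
  carrier := {p | (ofDual p).1 ≤ sᶜ ∨ ∃ b ∈ A, (ofDual p).1 ≤ b}
  isCofinal p := by
    obtain ⟨y, hy, hyp, hdec⟩ := hs.exists_ne_bot_le_and_decides (ofDual p).2
    exact ⟨toDual ⟨y, hy⟩, hdec, hyp⟩

theorem isPFilter_upperClosure_ideal (I : Ideal {x : B // x ≠ ⊥}ᵒᵈ) :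
    IsPFilter {x : B | ∃ p ∈ I, (ofDual p).1 ≤ x} := by
  refine .of_def ⟨⊤, I.nonempty.elim fun p hp => ⟨p, hp, le_top⟩⟩ ?_
    fun hxy ⟨p, hp, hpx⟩ => ⟨p, hp, hpx.trans hxy⟩
  rintro x ⟨p, hp, hpx⟩ y ⟨q, hq, hqy⟩
  obtain ⟨r, hr, hpr, hqr⟩ := I.directed p hp q hq
  exact ⟨_, ⟨r, hr, le_rfl⟩, (show (ofDual r).1 ≤ (ofDual p).1 from hpr).trans hpx,
    (show (ofDual r).1 ≤ (ofDual q).1 from hqr).trans hqy⟩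

end

/-- Rasiowa–Sikorski Lemma: given a nonzero `a` in a Boolean algebra `B` and a
countable family of subsets `A n` each having a supremum `s n` in `B`, there is
an ultrafilter `U` containing `a` such that whenever `s n ∈ U`, some element of
`A n` lies in `U`. -/
theorem rasiowa_sikorski (B : Type*) [BooleanAlgebra B] (a : B) (ha : a ≠ ⊥)
    (A : ℕ → Set B) (s : ℕ → B) (hs : ∀ n, IsLUB (A n) (s n)) :
    ∃ U : Set B, IsUltrafilterSet U ∧ a ∈ U ∧ ∀ n, s n ∈ U → (A n ∩ U).Nonempty := by
  let a' : {x : B // x ≠ ⊥}ᵒᵈ := toDual ⟨a, ha⟩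
  let 𝒟 n := decidingCofinal (hs n)
  let G := idealOfCofinals a' 𝒟
  let F := (isPFilter_upperClosure_ideal G).toPFilter
  have hF_bot : Disjoint (F : Set B) (⊥ : Ideal B) :=
    Set.disjoint_left.2 fun x ⟨p, _, hpx⟩ hx => (ofDual p).2 (le_bot_iff.1 (hpx.trans hx))
  obtain ⟨J, hJ, -, hFJ⟩ := DistribLattice.prime_ideal_of_disjoint_filter_ideal hF_bot
  have hFU : (F : Set B) ⊆ (J : Set B)ᶜ := hFJ.subset_compl_right
  refine ⟨_, isUltrafilterSet_compl_of_isPrime hJ, hFU ⟨_, mem_idealOfCofinals a' 𝒟, le_rfl⟩,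
    fun n hsn => ?_⟩
  obtain ⟨p, hpD, hpG⟩ := cofinal_meets_idealOfCofinals a' 𝒟 n
  have hpU : (ofDual p).1 ∉ J := hFU ⟨p, hpG, le_rfl⟩
  rcases hpD with hle | ⟨b, hb, hle⟩
  · exact absurd (J.lower hle (hJ.compl_mem_of_notMem hsn)) hpU
  · exact ⟨b, hb, fun hbJ => hpU (J.lower hle hbJ)⟩
end

section
/- For a compact Hausdorff zero-dimensional (Boolean) space X, the Vietoris hyperspace V(X) of closed subsets of X, with topology generated by the sets ◇U = {C closed | C ∩ U ≠ ∅} and their complements for U clopen in X, is again a compact Hausdorff zero-dimensional space. -/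
open TopologicalSpace

/-- The Vietoris topology on the hyperspace of closed subsets of a Boolean space `X`,
generated by the sets `◇U = {C | C ∩ U ≠ ∅}` and their complements, for `U` clopen. -/
def vietorisTopology (X : Type*) [TopologicalSpace X] : TopologicalSpace (Closeds X) :=
  TopologicalSpace.generateFrom
    ({s : Set (Closeds X) | ∃ U : Set X, IsClopen U ∧ s = {C : Closeds X | ((C : Set X) ∩ U).Nonempty}} ∪
     {s : Set (Closeds X) | ∃ U : Set X, IsClopen U ∧ s = {C : Closeds X | ((C : Set X) ∩ U).Nonempty}ᶜ})

/-!
Each `◇U` is clopen, and two distinct closed sets are separated by some `◇U`: pick a point in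
one but not the other and a clopen neighbourhood `U` of it missing the other. Compactness follows
from Alexander's subbasis theorem in its finite-intersection form: for a centred family of
subbasic sets `◇Uᵢ`, `(◇Vⱼ)ᶜ`, the closed set `X \ ⋃ⱼ Vⱼ` lies in all of them, since if it
missed some `Uᵢ` then the compact set `Uᵢ` would be covered by finitely many `Vⱼ`. A compact
totally separated space is Hausdorff with a basis of clopen sets.
-/

open Set

namespace Vietoris

variable {X : Type*} [TopologicalSpace X]

def diamond (U : Set X) : Set (Closeds X) := {C | ((C : Set X) ∩ U).Nonempty}

variable (X) in
def subbasis : Set (Set (Closeds X)) :=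
  {s | ∃ U : Set X, IsClopen U ∧ s = diamond U} ∪
    {s | ∃ U : Set X, IsClopen U ∧ s = (diamond U)ᶜ}

theorem vietorisTopology_eq_generateFrom : vietorisTopology X = generateFrom (subbasis X) := rfl

theorem compl_mem_subbasis {s : Set (Closeds X)} (hs : s ∈ subbasis X) : sᶜ ∈ subbasis X := by
  rcases hs with ⟨U, hU, rfl⟩ | ⟨U, hU, rfl⟩
  · exact .inr ⟨U, hU, rfl⟩
  · exact .inl ⟨U, hU, compl_compl _⟩

theorem exists_finite_diamond_subset_biUnion {U : Set X} (hU : IsCompact U) {S : Set (Set X)}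
    (hS : ∀ V ∈ S, IsOpen V) (hUS : U ⊆ ⋃₀ S) :
    ∃ t ⊆ S, t.Finite ∧ diamond U ⊆ ⋃ V ∈ t, diamond V := by
  rw [sUnion_eq_biUnion] at hUS
  obtain ⟨t, htS, ht, hUt⟩ := hU.elim_finite_subcover_image hS hUS
  refine ⟨t, htS, ht, fun C ⟨x, hxC, hxU⟩ => ?_⟩
  obtain ⟨V, hVt, hxV⟩ := mem_iUnion₂.mp (hUt hxU)
  exact mem_iUnion₂.mpr ⟨V, hVt, x, hxC, hxV⟩

attribute [local instance] vietorisTopology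

theorem isClopen_diamond {U : Set X} (hU : IsClopen U) : IsClopen (diamond U) :=
  ⟨isOpen_compl_iff.mp (isOpen_generateFrom_of_mem (.inr ⟨U, hU, rfl⟩)),
    isOpen_generateFrom_of_mem (.inl ⟨U, hU, rfl⟩)⟩

theorem exists_isClopen_mem_diamond_notMem_diamond
    (hX : IsTopologicalBasis {s : Set X | IsClopen s}) {C D : Closeds X} {x : X}
    (hxC : x ∈ C) (hxD : x ∉ D) : ∃ U, IsClopen U ∧ C ∈ diamond U ∧ D ∉ diamond U := by
  obtain ⟨U, hU, hxU, hUD⟩ := hX.exists_subset_of_mem_open hxD D.isClosed.isOpen_compl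
  exact ⟨U, hU, ⟨x, hxC, hxU⟩, fun ⟨y, hyD, hyU⟩ => hUD hyU hyD⟩

theorem totallySeparatedSpace (hX : IsTopologicalBasis {s : Set X | IsClopen s}) :
    TotallySeparatedSpace (Closeds X) := by
  refine totallySeparatedSpace_iff_exists_isClopen.mpr fun C D hCD => ?_
  by_cases hCD_sub : (C : Set X) ⊆ D
  · obtain ⟨y, hyD, hyC⟩ :=
      not_subset.mp fun hDC => hCD (SetLike.coe_injective (hCD_sub.antisymm hDC))
    obtain ⟨U, hU, hDU, hCU⟩ := exists_isClopen_mem_diamond_notMem_diamond hX hyD hyC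
    exact ⟨(diamond U)ᶜ, (isClopen_diamond hU).compl, hCU, not_not.mpr hDU⟩
  · obtain ⟨x, hxC, hxD⟩ := not_subset.mp hCD_sub
    obtain ⟨U, hU, hCU, hDU⟩ := exists_isClopen_mem_diamond_notMem_diamond hX hxC hxD
    exact ⟨diamond U, isClopen_diamond hU, hCU, hDU⟩

theorem compactSpace [CompactSpace X] : CompactSpace (Closeds X) := by
  refine compactSpace_generateFrom_of_compl_mem _ vietorisTopology_eq_generateFrom
    (fun _ => compl_mem_subbasis) fun P hP hP_fin => ?_
  set W := ⋃₀ {V : Set X | IsClopen V ∧ (diamond V)ᶜ ∈ P}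
  have hW : IsOpen W := isOpen_sUnion fun V hV => hV.1.isOpen
  refine ⟨⟨Wᶜ, hW.isClosed_compl⟩, fun s hs => ?_⟩
  rcases hP hs with ⟨U, hU, rfl⟩ | ⟨V, hV, rfl⟩
  · by_contra hUW
    have hUW : U ⊆ W := fun x hxU => by_contra fun hxW => hUW ⟨x, hxW, hxU⟩
    obtain ⟨t, htS, ht, hUt⟩ := exists_finite_diamond_subset_biUnion hU.isClosed.isCompact
      (fun V hV => hV.1.isOpen) hUW
    obtain ⟨C, hC⟩ := hP_fin (insert (diamond U) ((fun V => (diamond V)ᶜ) '' t))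
      (insert_subset hs (image_subset_iff.mpr fun V hV => (htS hV).2)) ((ht.image _).insert _)
    rw [sInter_insert, sInter_image] at hC
    obtain ⟨V, hVt, hCV⟩ := mem_iUnion₂.mp (hUt hC.1)
    exact mem_iInter₂.mp hC.2 V hVt hCV
  · rintro ⟨x, hxW, hxV⟩
    exact hxW (mem_sUnion_of_mem hxV ⟨hV, hs⟩)

end Vietoris

theorem vietoris_of_boolean_space_is_boolean_space_general (X : Type*) [TopologicalSpace X]
    [CompactSpace X] (hX : IsTopologicalBasis {s : Set X | IsClopen s}) :
    letI : TopologicalSpace (Closeds X) := vietorisTopology X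
    CompactSpace (Closeds X) ∧ T2Space (Closeds X) ∧
      IsTopologicalBasis {s : Set (Closeds X) | IsClopen s} := by
  let : TopologicalSpace (Closeds X) := vietorisTopology X
  have := Vietoris.compactSpace (X := X)
  have := Vietoris.totallySeparatedSpace hX
  exact ⟨‹_›, inferInstance, isTopologicalBasis_isClopen⟩

/-- For a compact Hausdorff zero-dimensional space `X`, the Vietoris hyperspace of
closed subsets of `X` is again compact, Hausdorff and zero-dimensional. -/
theorem vietoris_of_boolean_space_is_boolean_space (X : Type*) [TopologicalSpace X]
    [CompactSpace X] [T2Space X] (hX : IsTopologicalBasis {s : Set X | IsClopen s}) :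
    letI : TopologicalSpace (Closeds X) := vietorisTopology X
    CompactSpace (Closeds X) ∧ T2Space (Closeds X) ∧
      IsTopologicalBasis {s : Set (Closeds X) | IsClopen s} :=
  vietoris_of_boolean_space_is_boolean_space_general X hX
end

section
/- For a Boolean space X with dual Boolean algebra B (of clopen subsets), the Vietoris hyperspace V(X) is homeomorphic to the space M(X,2) of finitely additive 2-valued measures on B (functions μ : B → 2 with μ(0)=0 and μ(a ∨ b) ∨ μ(a ∧ b) = μ(a) ∨ μ(b) for all a,b), topologized as a subspace of 2^B, via C ↦ μ_C where μ_C(a) = 1 iff the clopen set corresponding to a meets C. -/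
open TopologicalSpace

/-- The space of finitely additive `2`-valued measures on the Boolean algebra of
clopen subsets of `X`, topologized as a subspace of `2^B` with the product topology. -/
def MeasSpace (X : Type*) [TopologicalSpace X] : Type _ :=
  {μ : Clopens X → Bool // μ ⊥ = false ∧
    ∀ a b : Clopens X, (μ (a ⊔ b) || μ (a ⊓ b)) = (μ a || μ b)}

instance (X : Type*) [TopologicalSpace X] : TopologicalSpace (MeasSpace X) :=
  instTopologicalSpaceSubtype

/-!
Every finitely additive `2`-valued measure `μ` on the clopen algebra is `μ_C` for exactly one
closed set, its support `C = X \ ⋃ {a | μ a = 0}`. Injectivity of `C ↦ μ_C` is the fact that a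
closed set is cut out by the clopens missing it. Surjectivity uses compactness: the null clopens
form a directed open family, so if it covered a clopen `a`, a single null clopen would already
contain `a`, forcing `μ a = 0`. Both topologies are generated by the same sets
`{C | C ∩ a ≠ ∅}` and their complements, which makes the bijection a homeomorphism.
-/

section Vietoris

attribute [local instance] vietorisTopology

variable {X Y : Type*} [TopologicalSpace X] [TopologicalSpace Y]

theorem continuous_vietoris_iff {f : Y → Closeds X} :
    Continuous f ↔
      ∀ U : Set X, IsClopen U → IsClopen {y | (U ∩ f y).Nonempty} := by
  refine ⟨fun hf U hU => ?_, fun h => continuous_generateFrom_iff.2 ?_⟩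
  · simp only [Set.inter_comm U]
    refine ⟨?_, ?_⟩
    · rw [← isOpen_compl_iff]
      exact hf.isOpen_preimage _ (isOpen_generateFrom_of_mem (Or.inr ⟨U, hU, rfl⟩))
    · exact hf.isOpen_preimage _ (isOpen_generateFrom_of_mem (Or.inl ⟨U, hU, rfl⟩))
  · rintro s (⟨U, hU, rfl⟩ | ⟨U, hU, rfl⟩)
    · simpa only [Set.inter_comm U, Set.preimage_ofPred_eq] using (h U hU).isOpen
    · simpa only [Set.inter_comm U, Set.preimage_compl, Set.preimage_ofPred_eq] using
        (h U hU).isClosed.isOpen_compl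

namespace MeasSpace

theorem apply_sup_eq_false (μ : MeasSpace X) {a b : Clopens X} (ha : μ.1 a = false)
    (hb : μ.1 b = false) : μ.1 (a ⊔ b) = false :=
  (by simpa [ha, hb] using μ.2.2 a b : _ ∧ _).1

theorem apply_mono (μ : MeasSpace X) {a b : Clopens X} (hab : a ≤ b) (ha : μ.1 a = true) :
    μ.1 b = true := by
  simpa [sup_sdiff_cancel' le_rfl hab, μ.2.1, ha] using μ.2.2 a (b \ a)

theorem continuous_apply (a : Clopens X) : Continuous fun μ : MeasSpace X => μ.1 a :=
  (_root_.continuous_apply a).comp continuous_subtype_val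

open scoped Classical in
noncomputable def ofCloseds (C : Closeds X) : MeasSpace X :=
  ⟨fun a => decide ((a : Set X) ∩ C).Nonempty, by simp, fun a b => by
    rw [Bool.eq_iff_iff]
    simp only [Bool.or_eq_true, decide_eq_true_iff, Clopens.coe_sup,
      Clopens.coe_inf, Set.union_inter_distrib_right, Set.union_nonempty]
    exact ⟨fun h => h.elim id fun h => .inl (h.mono (by gcongr; exact Set.inter_subset_left)),
      .inl⟩⟩

theorem ofCloseds_apply (C : Closeds X) (a : Clopens X) :
    (ofCloseds C).1 a = true ↔ ((a : Set X) ∩ C).Nonempty := by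
  simp [ofCloseds]

def support (μ : MeasSpace X) : Closeds X :=
  ⟨(⋃ a : {a : Clopens X // μ.1 a = false}, (a.1 : Set X))ᶜ,
    (isOpen_iUnion fun a => a.1.isClopen.isOpen).isClosed_compl⟩

theorem inter_support_nonempty_iff [CompactSpace X] (μ : MeasSpace X) (a : Clopens X) :
    ((a : Set X) ∩ μ.support).Nonempty ↔ μ.1 a = true := by
  refine ⟨fun ⟨x, hxa, hx⟩ => ?_, fun ha => ?_⟩
  · by_contra h
    exact hx (Set.mem_iUnion.2 ⟨⟨a, by simpa using h⟩, hxa⟩)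
  · by_contra h
    have hcover : (a : Set X) ⊆ ⋃ b : {b : Clopens X // μ.1 b = false}, (b.1 : Set X) :=
      fun x hx => by_contra fun hx' => h ⟨x, hx, hx'⟩
    have : Nonempty {b : Clopens X // μ.1 b = false} := ⟨⟨⊥, μ.2.1⟩⟩
    obtain ⟨b, hab⟩ := a.isClopen.isClosed.isCompact.elim_directed_cover _
      (fun b => b.1.isClopen.isOpen) hcover fun b c =>
        ⟨⟨b.1 ⊔ c.1, μ.apply_sup_eq_false b.2 c.2⟩, le_sup_left (a := b.1), le_sup_right⟩
    simpa [b.2] using μ.apply_mono (SetLike.coe_subset_coe.1 hab) ha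

theorem support_ofCloseds (hX : IsTopologicalBasis {s : Set X | IsClopen s}) (C : Closeds X) :
    (ofCloseds C).support = C := by
  ext x
  simp only [support, Closeds.coe_mk, Set.mem_compl_iff, Set.mem_iUnion, not_exists,
    Subtype.forall, ← Bool.not_eq_true, ofCloseds_apply]
  refine ⟨fun h => by_contra fun hx => ?_, fun hx a ha hxa => ha ⟨x, hxa, hx⟩⟩
  obtain ⟨U, hU, hxU, hUC⟩ := hX.exists_subset_of_mem_open hx C.isClosed.isOpen_compl
  exact h ⟨U, hU⟩ (fun ⟨y, hyU, hyC⟩ => hUC hyU hyC) hxU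

theorem continuous_ofCloseds : Continuous (ofCloseds : Closeds X → MeasSpace X) := by
  refine continuous_pi (fun a => (continuous_bool_rng true).2 ?_) |>.subtype_mk _
  simpa only [Set.preimage, Set.mem_singleton_iff, decide_eq_true_eq, id_eq] using
    continuous_vietoris_iff.1 continuous_id _ a.isClopen

theorem continuous_support [CompactSpace X] : Continuous (support : MeasSpace X → Closeds X) :=
  continuous_vietoris_iff.2 fun U hU => by
    have : {μ : MeasSpace X | (U ∩ μ.support).Nonempty} = {μ | μ.1 ⟨U, hU⟩ = true} :=
      Set.ext fun μ => inter_support_nonempty_iff μ ⟨U, hU⟩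
    rw [this]
    exact (continuous_bool_rng true).1 (continuous_apply ⟨U, hU⟩)

noncomputable def closedsHomeomorph [CompactSpace X]
    (hX : IsTopologicalBasis {s : Set X | IsClopen s}) : Closeds X ≃ₜ MeasSpace X where
  toFun := ofCloseds
  invFun := support
  left_inv := support_ofCloseds hX
  right_inv μ := Subtype.ext <| funext fun a => by
    rw [Bool.eq_iff_iff, ofCloseds_apply, inter_support_nonempty_iff]
  continuous_toFun := continuous_ofCloseds
  continuous_invFun := continuous_support

end MeasSpace

end Vietoris

theorem vietoris_homeomorphic_measures_general (X : Type*) [TopologicalSpace X]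
    [CompactSpace X] (hX : IsTopologicalBasis {s : Set X | IsClopen s}) :
    letI : TopologicalSpace (Closeds X) := vietorisTopology X
    ∃ e : Closeds X ≃ₜ MeasSpace X,
      ∀ (C : Closeds X) (a : Clopens X),
        ((e C).1 a = true ↔ ((a : Set X) ∩ (C : Set X)).Nonempty) :=
  ⟨MeasSpace.closedsHomeomorph hX, MeasSpace.ofCloseds_apply⟩

/-- For a Boolean space `X` with dual algebra `B` of clopen sets, the Vietoris
hyperspace `V(X)` is homeomorphic to the space `M(X,2)` of finitely additive
`2`-valued measures on `B`, via `C ↦ μ_C` where `μ_C(a) = 1` iff `a` meets `C`. -/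
theorem vietoris_homeomorphic_measures (X : Type*) [TopologicalSpace X]
    [CompactSpace X] [T2Space X] (hX : IsTopologicalBasis {s : Set X | IsClopen s}) :
    letI : TopologicalSpace (Closeds X) := vietorisTopology X
    ∃ e : Closeds X ≃ₜ MeasSpace X,
      ∀ (C : Closeds X) (a : Clopens X),
        ((e C).1 a = true ↔ ((a : Set X) ∩ (C : Set X)).Nonempty) :=
  vietoris_homeomorphic_measures_general X hX
end

section
/- Let L be a bounded distributive lattice and K ⊆ L a finite sublattice (containing 0 and 1). If for every b ∈ L the set {k ∈ K | k ≤ b} has a greatest element and every join-prime element of K is join-prime in L, then the map h : L → K sending b to the greatest element of K below b is a lattice homomorphism satisfying h(k) = k for all k ∈ K. -/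
/-!
In a finite distributive lattice every element is a join of join-primes, so an element `k ∈ K`
below `a ⊔ b` is a join of join-primes of `K`. Each of these is join-prime in `L`, hence lies
below `a` or below `b`, and therefore below the greatest element of `K` under `a` or under `b`.
This gives `h (a ⊔ b) ≤ h a ⊔ h b`; every other property of `h` follows from `h` being the
right adjoint of the inclusion `K ↪ L`.
-/

/-- `p` is join-prime in a bounded lattice: `p ≠ ⊥` and `p ≤ a ⊔ b` implies
`p ≤ a` or `p ≤ b`. -/
def JoinPrimeElt {L : Type*} [Lattice L] [BoundedOrder L] (p : L) : Prop :=
  p ≠ ⊥ ∧ ∀ a b : L, p ≤ a ⊔ b → p ≤ a ∨ p ≤ b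

section JoinPrimeIn

variable {L : Type*} [DistribLattice L] [OrderBot L] {K : Set L}

def IsJoinPrimeIn (K : Set L) (p : L) : Prop :=
  p ≠ ⊥ ∧ ∀ a ∈ K, ∀ b ∈ K, p ≤ a ⊔ b → p ≤ a ∨ p ≤ b

theorem exists_lt_sup_eq_of_not_isJoinPrimeIn (hinf : ∀ a ∈ K, ∀ b ∈ K, a ⊓ b ∈ K)
    {k : L} (hk : k ∈ K) (hk_ne : k ≠ ⊥) (hk_np : ¬IsJoinPrimeIn K k) :
    ∃ u ∈ K, ∃ v ∈ K, u < k ∧ v < k ∧ u ⊔ v = k := by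
  simp only [IsJoinPrimeIn, hk_ne, ne_eq, not_false_eq_true, true_and, not_forall,
    not_or] at hk_np
  obtain ⟨u, hu, v, hv, hkuv, hku, hkv⟩ := hk_np
  refine ⟨k ⊓ u, hinf k hk u hu, k ⊓ v, hinf k hk v hv, inf_lt_left.2 hku,
    inf_lt_left.2 hkv, ?_⟩
  rw [← inf_sup_left, inf_eq_left.2 hkuv]

theorem Set.Finite.induction_on_isJoinPrimeIn (hfin : K.Finite)
    (hinf : ∀ a ∈ K, ∀ b ∈ K, a ⊓ b ∈ K) {P : L → Prop} (bot : P ⊥)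
    (prime : ∀ p ∈ K, IsJoinPrimeIn K p → P p)
    (sup : ∀ a ∈ K, ∀ b ∈ K, P a → P b → P (a ⊔ b)) {k : L} (hk : k ∈ K) : P k := by
  refine (hfin.wellFoundedOn (r := (· < ·))).induction hk fun k hk ih => ?_
  by_cases hk_ne : k = ⊥
  · exact hk_ne ▸ bot
  by_cases hk_p : IsJoinPrimeIn K k
  · exact prime k hk hk_p
  obtain ⟨u, hu, v, hv, huk, hvk, rfl⟩ :=
    exists_lt_sup_eq_of_not_isJoinPrimeIn hinf hk hk_ne hk_p
  exact sup u hu v hv (ih u hu huk) (ih v hv hvk)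

end JoinPrimeIn

section GreatestBelow

variable {L : Type*} {K : Set L} {f : L → L}

theorem le_greatestBelow_iff [Preorder L] (hf : ∀ b, IsGreatest {k ∈ K | k ≤ b} (f b))
    {k b : L} (hk : k ∈ K) : k ≤ f b ↔ k ≤ b :=
  ⟨fun hkf => hkf.trans (hf b).1.2, fun hkb => (hf b).2 ⟨hk, hkb⟩⟩

theorem greatestBelow_eq_iff [PartialOrder L] (hf : ∀ b, IsGreatest {k ∈ K | k ≤ b} (f b))
    {x b : L} (hx : x ∈ K) (hxb : ∀ k ∈ K, k ≤ x ↔ k ≤ b) : f b = x :=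
  le_antisymm ((hxb _ (hf b).1.1).2 (hf b).1.2)
    ((le_greatestBelow_iff hf hx).2 ((hxb x hx).1 le_rfl))

theorem greatestBelow_of_mem [PartialOrder L] (hf : ∀ b, IsGreatest {k ∈ K | k ≤ b} (f b))
    {k : L} (hk : k ∈ K) : f k = k :=
  greatestBelow_eq_iff hf hk fun _ _ => Iff.rfl

theorem greatestBelow_inf [Lattice L] (hf : ∀ b, IsGreatest {k ∈ K | k ≤ b} (f b))
    (hinf : ∀ a ∈ K, ∀ b ∈ K, a ⊓ b ∈ K) (a b : L) : f (a ⊓ b) = f a ⊓ f b :=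
  greatestBelow_eq_iff hf (hinf _ (hf a).1.1 _ (hf b).1.1) fun k hk => by
    rw [le_inf_iff, le_inf_iff, le_greatestBelow_iff hf hk, le_greatestBelow_iff hf hk]

theorem le_greatestBelow_sup_greatestBelow [DistribLattice L] [BoundedOrder L]
    (hf : ∀ b, IsGreatest {k ∈ K | k ≤ b} (f b))
    (hfin : K.Finite) (hinf : ∀ a ∈ K, ∀ b ∈ K, a ⊓ b ∈ K)
    (hjp : ∀ p ∈ K, IsJoinPrimeIn K p → JoinPrimeElt p) {a b k : L} (hk : k ∈ K)
    (hkab : k ≤ a ⊔ b) : k ≤ f a ⊔ f b := by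
  revert hkab
  refine hfin.induction_on_isJoinPrimeIn (P := fun k => k ≤ a ⊔ b → k ≤ f a ⊔ f b) hinf
    (fun _ => bot_le) (fun p hp hp_prime hpab => ?_)
    (fun u _ v _ hu hv huv => sup_le (hu (le_sup_left.trans huv)) (hv (le_sup_right.trans huv)))
    hk
  rcases (hjp p hp hp_prime).2 a b hpab with hpa | hpb
  · exact le_sup_of_le_left ((le_greatestBelow_iff hf hp).2 hpa)
  · exact le_sup_of_le_right ((le_greatestBelow_iff hf hp).2 hpb)

theorem greatestBelow_sup [DistribLattice L] [BoundedOrder L]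
    (hf : ∀ b, IsGreatest {k ∈ K | k ≤ b} (f b)) (hfin : K.Finite)
    (hsup : ∀ a ∈ K, ∀ b ∈ K, a ⊔ b ∈ K) (hinf : ∀ a ∈ K, ∀ b ∈ K, a ⊓ b ∈ K)
    (hjp : ∀ p ∈ K, IsJoinPrimeIn K p → JoinPrimeElt p) (a b : L) :
    f (a ⊔ b) = f a ⊔ f b :=
  greatestBelow_eq_iff hf (hsup _ (hf a).1.1 _ (hf b).1.1) fun _ hk =>
    ⟨fun hk_le => hk_le.trans (sup_le_sup (hf a).1.2 (hf b).1.2),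
      le_greatestBelow_sup_greatestBelow hf hfin hinf hjp hk⟩

end GreatestBelow

theorem finite_sublattice_retraction_general (L : Type*) [DistribLattice L] [BoundedOrder L]
    (K : Set L) (hfin : K.Finite) (htop : ⊤ ∈ K)
    (hsup : ∀ a ∈ K, ∀ b ∈ K, a ⊔ b ∈ K) (hinf : ∀ a ∈ K, ∀ b ∈ K, a ⊓ b ∈ K)
    (hmax : ∀ b : L, ∃ k ∈ K, k ≤ b ∧ ∀ k' ∈ K, k' ≤ b → k' ≤ k)
    (hjp : ∀ p ∈ K, (p ≠ ⊥ ∧ ∀ a ∈ K, ∀ b ∈ K, p ≤ a ⊔ b → p ≤ a ∨ p ≤ b) →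
      JoinPrimeElt p) :
    ∃ h : L → L, (∀ b : L, h b ∈ K ∧ h b ≤ b ∧ ∀ k ∈ K, k ≤ b → k ≤ h b) ∧
      (∀ a b : L, h (a ⊔ b) = h a ⊔ h b) ∧ (∀ a b : L, h (a ⊓ b) = h a ⊓ h b) ∧
      h ⊥ = ⊥ ∧ h ⊤ = ⊤ ∧ ∀ k ∈ K, h k = k := by
  choose h hK hle hmax using hmax
  have hgreatest : ∀ b, IsGreatest {k ∈ K | k ≤ b} (h b) :=
    fun b => ⟨⟨hK b, hle b⟩, fun k hk => hmax b k hk.1 hk.2⟩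
  exact ⟨h, fun b => ⟨hK b, hle b, hmax b⟩, greatestBelow_sup hgreatest hfin hsup hinf hjp,
    greatestBelow_inf hgreatest hinf, le_bot_iff.1 (hle ⊥), greatestBelow_of_mem hgreatest htop,
    fun _ => greatestBelow_of_mem hgreatest⟩

/-- Let `K` be a finite sublattice (containing the bounds) of a bounded distributive
lattice `L` such that for every `b ∈ L` the set `{k ∈ K | k ≤ b}` has a greatest
element, and every join-prime of `K` is join-prime in `L`. Then the map sending `b`
to the greatest element of `K` below `b` is a lattice homomorphism fixing `K`. -/
theorem finite_sublattice_retraction (L : Type*) [DistribLattice L] [BoundedOrder L]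
    (K : Set L) (hfin : K.Finite) (hbot : ⊥ ∈ K) (htop : ⊤ ∈ K)
    (hsup : ∀ a ∈ K, ∀ b ∈ K, a ⊔ b ∈ K) (hinf : ∀ a ∈ K, ∀ b ∈ K, a ⊓ b ∈ K)
    (hmax : ∀ b : L, ∃ k ∈ K, k ≤ b ∧ ∀ k' ∈ K, k' ≤ b → k' ≤ k)
    (hjp : ∀ p ∈ K, (p ≠ ⊥ ∧ ∀ a ∈ K, ∀ b ∈ K, p ≤ a ⊔ b → p ≤ a ∨ p ≤ b) →
      JoinPrimeElt p) :
    ∃ h : L → L, (∀ b : L, h b ∈ K ∧ h b ≤ b ∧ ∀ k ∈ K, k ≤ b → k ≤ h b) ∧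
      (∀ a b : L, h (a ⊔ b) = h a ⊔ h b) ∧ (∀ a b : L, h (a ⊓ b) = h a ⊓ h b) ∧
      h ⊥ = ⊥ ∧ h ⊤ = ⊤ ∧ ∀ k ∈ K, h k = k :=
  finite_sublattice_retraction_general L K hfin htop hsup hinf hmax hjp
end

section
/- If B is a Boolean algebra with Stone dual space X, then the dual space of the free Boolean algebra generated by the set {◇a | a ∈ B} modulo the relations ◇0 = 0 and ◇(a ∨ b) = ◇a ∨ ◇b is homeomorphic to the Vietoris hyperspace V(X); equivalently, Boolean algebra homomorphisms from this quotient to 2 correspond bijectively to closed subsets of X, via h ↦ {x ∈ X | ∀ a ∈ B, x ∈ â implies h(◇a) = 1}. -/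
/-- The Stone dual space of `B`: ultrafilters with the Stone topology. -/
def StoneSpace (B : Type*) [BooleanAlgebra B] : Type _ := {F : Set B // IsUltrafilterSet F}

instance (B : Type*) [BooleanAlgebra B] : TopologicalSpace (StoneSpace B) :=
  TopologicalSpace.generateFrom {s : Set (StoneSpace B) | ∃ a : B, s = {U | a ∈ U.1}}

namespace StoneSpace

variable {B : Type*} [BooleanAlgebra B]

def basicOpen (a : B) : Set (StoneSpace B) := {x | a ∈ x.1}

def support (d : B → Bool) : Set (StoneSpace B) := {x | ∀ a ∈ x.1, d a = true}

open scoped Classical in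
noncomputable def hits (C : Set (StoneSpace B)) (a : B) : Bool :=
  decide (basicOpen a ∩ C).Nonempty

lemma isOpen_basicOpen (a : B) : IsOpen (basicOpen a) :=
  TopologicalSpace.isOpen_generateFrom_of_mem ⟨a, rfl⟩

lemma isTopologicalBasis_range_basicOpen :
    TopologicalSpace.IsTopologicalBasis (Set.range (basicOpen (B := B))) := by
  refine ⟨?_, ?_, ?_⟩
  · rintro _ ⟨a, rfl⟩ _ ⟨b, rfl⟩ x hx
    exact ⟨basicOpen (a ⊓ b), ⟨a ⊓ b, rfl⟩, x.2.2.2.2.1 a b hx.1 hx.2,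
      fun y hy => ⟨y.2.2.2.1 _ a hy inf_le_left, y.2.2.2.1 _ b hy inf_le_right⟩⟩
  · exact Set.sUnion_eq_univ_iff.2 fun x => ⟨basicOpen ⊤, ⟨⊤, rfl⟩, x.2.1⟩
  · change TopologicalSpace.generateFrom _ = _
    congr 1
    ext s
    exact exists_congr fun a => eq_comm

lemma sup_mem_iff (x : StoneSpace B) {a b : B} : a ⊔ b ∈ x.1 ↔ a ∈ x.1 ∨ b ∈ x.1 := by
  obtain ⟨-, -, hup, hinf, hcompl⟩ := x.2
  refine ⟨fun hab => (hcompl a).imp_right fun ha => hup _ _ (hinf _ _ ha hab) ?_, ?_⟩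
  · simp [inf_sup_left]
  · rintro (ha | hb)
    exacts [hup _ _ ha le_sup_left, hup _ _ hb le_sup_right]

lemma basicOpen_bot : basicOpen (⊥ : B) = ∅ :=
  Set.eq_empty_of_forall_notMem fun x => x.2.2.1

lemma basicOpen_sup (a b : B) : basicOpen (a ⊔ b) = basicOpen a ∪ basicOpen b :=
  Set.ext fun x => sup_mem_iff x

lemma support_eq_iInter (d : B → Bool) :
    support d = ⋂ (a) (_ : d a = false), (basicOpen a)ᶜ := by
  ext x
  simp only [support, basicOpen, Set.mem_ofPred_eq, Set.mem_iInter, Set.mem_compl_iff]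
  exact forall_congr' fun a => by cases d a <;> simp

lemma isClosed_support (d : B → Bool) : IsClosed (support d) := by
  rw [support_eq_iInter]
  exact isClosed_biInter fun a _ => (isOpen_basicOpen a).isClosed_compl

lemma hits_bot (C : Set (StoneSpace B)) : hits C ⊥ = false := by
  simp [hits, basicOpen_bot]

lemma hits_sup (C : Set (StoneSpace B)) (a b : B) : hits C (a ⊔ b) = (hits C a || hits C b) := by
  rw [Bool.eq_iff_iff]
  simp only [hits, Bool.or_eq_true, decide_eq_true_eq, basicOpen_sup,
    Set.union_inter_distrib_right, Set.union_nonempty]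

lemma support_hits (C : Set (StoneSpace B)) : support (hits C) = closure C := by
  ext x
  simp only [support, hits, decide_eq_true_eq, Set.mem_ofPred_eq,
    isTopologicalBasis_range_basicOpen.mem_closure_iff, Set.mem_range, forall_exists_index,
    forall_apply_eq_imp_iff]
  rfl

def ofPrimeIdeal (J : Order.Ideal B) [hJ : J.IsPrime] : StoneSpace B :=
  ⟨(J : Set B)ᶜ, hJ.top_notMem, not_not.2 J.bot_mem, fun _ _ ha hab hb => ha (J.lower hab hb),
    fun _ _ ha hb hab => (hJ.mem_or_mem hab).elim ha hb,
    fun a => not_and_or.1 fun h => hJ.top_notMem (by simpa using J.sup_mem h.1 h.2)⟩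

section Valuation

variable {d : B → Bool} (hd_bot : d ⊥ = false)
  (hd_sup : ∀ a b : B, d (a ⊔ b) = (d a || d b))

include hd_sup in
lemma eq_true_of_le {a b : B} (hab : a ≤ b) (ha : d a = true) : d b = true := by
  rw [← sup_eq_right.2 hab, hd_sup, ha, Bool.true_or]

include hd_bot hd_sup in
lemma isIdeal_setOf_eq_false : Order.IsIdeal {b | d b = false} where
  IsLowerSet _ _ hab hb :=
    Bool.eq_false_iff.2 fun ha => Bool.eq_false_iff.1 hb (eq_true_of_le hd_sup hab ha)
  Nonempty := ⟨⊥, hd_bot⟩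
  Directed a ha b hb :=
    ⟨a ⊔ b, by rw [Set.mem_ofPred_eq, hd_sup, ha, hb]; rfl, le_sup_left, le_sup_right⟩

include hd_bot hd_sup in
lemma exists_mem_support_of_eq_true {a : B} (ha : d a = true) : ∃ x ∈ support d, a ∈ x.1 := by
  have hdisj : Disjoint (Order.PFilter.principal a : Set B)
      (isIdeal_setOf_eq_false hd_bot hd_sup).toIdeal :=
    Set.disjoint_left.2 fun b hab hb =>
      Bool.false_ne_true (hb.symm.trans (eq_true_of_le hd_sup hab ha))
  obtain ⟨J, hJ, hIJ, hJa⟩ := DistribLattice.prime_ideal_of_disjoint_filter_ideal hdisj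
  refine ⟨ofPrimeIdeal J, fun b hb => ?_, Set.disjoint_left.1 hJa le_rfl⟩
  exact eq_true_of_ne_false fun h => hb (hIJ h)

include hd_bot hd_sup in
lemma hits_support : hits (support d) = d := by
  funext a
  rw [Bool.eq_iff_iff]
  simp only [hits, decide_eq_true_eq]
  refine ⟨fun ⟨x, hax, hx⟩ => hx a hax, fun ha => ?_⟩
  obtain ⟨x, hx, hax⟩ := exists_mem_support_of_eq_true hd_bot hd_sup ha
  exact ⟨x, hax, hx⟩

end Valuation

end StoneSpace

/-- By freeness, a Boolean algebra homomorphism from `MA(B)` to `2` is the same thing as an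
assignment `d : B → 2` of the generators `◇a` with `d(0) = 0` and `d(a ∨ b) = d(a) ∨ d(b)`. -/
theorem dual_of_MA_is_vietoris (B : Type*) [BooleanAlgebra B] :
    (∀ d : {d : B → Bool // d ⊥ = false ∧ ∀ a b : B, d (a ⊔ b) = (d a || d b)},
      IsClosed {x : StoneSpace B | ∀ a : B, a ∈ x.1 → d.1 a = true}) ∧
    Function.Injective
      (fun d : {d : B → Bool // d ⊥ = false ∧ ∀ a b : B, d (a ⊔ b) = (d a || d b)} =>
        {x : StoneSpace B | ∀ a : B, a ∈ x.1 → d.1 a = true}) ∧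
    (∀ C : Set (StoneSpace B), IsClosed C →
      ∃ d : {d : B → Bool // d ⊥ = false ∧ ∀ a b : B, d (a ⊔ b) = (d a || d b)},
        {x : StoneSpace B | ∀ a : B, a ∈ x.1 → d.1 a = true} = C) := by
  open StoneSpace in
  refine ⟨fun d => isClosed_support d.1, fun d₁ d₂ h => Subtype.ext ?_,
    fun C hC => ⟨⟨hits C, hits_bot C, hits_sup C⟩, (support_hits C).trans hC.closure_eq⟩⟩
  rw [← hits_support d₁.2.1 d₁.2.2, ← hits_support d₂.2.1 d₂.2.2]
  exact congrArg hits h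
end

section
/- In the profinite interval Γ (the limit of the system of chains Γ_n with flooring maps), the continuous surjection γ : Γ → [0,1] given by evaluating the limit of the approximating sequence, together with the section ι : [0,1] → Γ sending rational q to its stabilizing approximation q⌝ and irrational r to its strict lower approximation r⌞, satisfies γ ∘ ι = id on [0,1]. -/
/-- The chain `Γ_n = {0, 1/n, 2/n, …, 1}`. -/
def GammaChain (n : ℕ+) : Set ℚ := {q : ℚ | ∃ a : ℕ, a ≤ (n : ℕ) ∧ q = (a : ℚ) / (n : ℕ)}

/-- The profinite interval `Γ`: the inverse limit of the chains `Γ_n` under the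
flooring maps, i.e. sequences `(x_n)` with `x_n ∈ Γ_n` such that for `n ∣ m`,
`x_n` is the largest element of `Γ_n` below `x_m`. -/
def GammaLim : Type :=
  {x : ℕ+ → ℚ // (∀ n, x n ∈ GammaChain n) ∧
    ∀ m n : ℕ+, (n : ℕ) ∣ (m : ℕ) →
      x n ≤ x m ∧ ∀ q ∈ GammaChain n, q ≤ x m → q ≤ x n}

/-- The map `γ : Γ → [0,1]`, sending a compatible sequence to its supremum in `ℝ`. -/
noncomputable def gammaEval (x : GammaLim) : ℝ :=
  sSup (Set.range fun n : ℕ+ => ((x.1 n : ℚ) : ℝ))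

/-!
The `n`-th entry of `ι r` is `⌊n r⌋ / n`, the largest point of `Γ_n` not exceeding `r`.
Since `Γ_n ⊆ Γ_m` for `n ∣ m`, the maximality of these entries makes the sequence compatible,
and since `r - 1/n < ⌊n r⌋ / n ≤ r`, its supremum is `r`.
-/

theorem GammaChain.mono_of_dvd {m n : ℕ+} (hnm : (n : ℕ) ∣ m) : GammaChain n ⊆ GammaChain m := by
  obtain ⟨k, hk⟩ := hnm
  have hk0 : (k : ℚ) ≠ 0 := by
    rintro hk0
    exact m.ne_zero (by rw [hk, Nat.cast_eq_zero.mp hk0, mul_zero])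
  rintro _ ⟨a, ha, rfl⟩
  refine ⟨a * k, by rw [hk]; exact Nat.mul_le_mul_right k ha, ?_⟩
  rw [hk]
  push_cast
  rw [mul_div_mul_right _ _ hk0]

theorem GammaChain.intCast_div_mem {n : ℕ+} {a : ℤ} (h0 : 0 ≤ a) (h1 : a ≤ (n : ℕ)) :
    (a : ℚ) / (n : ℕ) ∈ GammaChain n := by
  lift a to ℕ using h0
  exact ⟨a, by exact_mod_cast h1, rfl⟩

noncomputable def floorApprox (r : ℝ) (n : ℕ+) : ℚ := (⌊(n : ℕ) * r⌋ : ℚ) / (n : ℕ)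

section floorApprox

variable (r : ℝ) (n : ℕ+)

theorem cast_floorApprox : (floorApprox r n : ℝ) = ⌊(n : ℕ) * r⌋ / (n : ℕ) := by
  simp [floorApprox]

theorem floorApprox_le : (floorApprox r n : ℝ) ≤ r := by
  rw [cast_floorApprox, div_le_iff₀ (by positivity), mul_comm]
  exact Int.floor_le _

theorem sub_inv_lt_floorApprox : r - 1 / (n : ℕ) < floorApprox r n := by
  have hn : (0 : ℝ) < (n : ℕ) := by positivity
  rw [cast_floorApprox, lt_div_iff₀ hn, sub_mul, one_div_mul_cancel hn.ne', mul_comm]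
  exact Int.sub_one_lt_floor _

theorem floorApprox_mem_gammaChain (h0 : 0 ≤ r) (h1 : r ≤ 1) :
    floorApprox r n ∈ GammaChain n := by
  refine GammaChain.intCast_div_mem (Int.floor_nonneg.mpr (by positivity)) ?_
  calc ⌊(n : ℕ) * r⌋ ≤ ⌊((n : ℕ) : ℝ)⌋ := Int.floor_mono (mul_le_of_le_one_right (by positivity) h1)
    _ = (n : ℕ) := Int.floor_natCast _

theorem le_floorApprox_of_mem {q : ℚ} (hq : q ∈ GammaChain n) (hqr : (q : ℝ) ≤ r) :
    q ≤ floorApprox r n := by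
  obtain ⟨a, -, rfl⟩ := hq
  have hn : (0 : ℝ) < (n : ℕ) := by positivity
  have ha : (a : ℤ) ≤ ⌊(n : ℕ) * r⌋ := by
    rw [Int.le_floor]
    push_cast at hqr ⊢
    rwa [div_le_iff₀ hn, mul_comm] at hqr
  unfold floorApprox
  gcongr
  exact_mod_cast ha

end floorApprox

noncomputable def gammaSection (r : ℝ) (h0 : 0 ≤ r) (h1 : r ≤ 1) : GammaLim :=
  ⟨floorApprox r, fun n => floorApprox_mem_gammaChain r n h0 h1, fun m n hnm =>
    ⟨le_floorApprox_of_mem r m (GammaChain.mono_of_dvd hnm (floorApprox_mem_gammaChain r n h0 h1))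
        (floorApprox_le r n),
      fun _ hq hqm => le_floorApprox_of_mem r n hq
        ((Rat.cast_le.mpr hqm).trans (floorApprox_le r m))⟩⟩

theorem gammaEval_gammaSection (r : ℝ) (h0 : 0 ≤ r) (h1 : r ≤ 1) :
    gammaEval (gammaSection r h0 h1) = r := by
  refine csSup_eq_of_forall_le_of_forall_lt_exists_gt (Set.range_nonempty _)
    (by rintro _ ⟨n, rfl⟩; exact floorApprox_le r n) fun w hw => ?_
  obtain ⟨n, hn⟩ := exists_nat_one_div_lt (sub_pos.mpr hw)
  refine ⟨_, ⟨n.succPNat, rfl⟩, ?_⟩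
  have := sub_inv_lt_floorApprox r n.succPNat
  simp only [Nat.succPNat_coe, Nat.cast_succ] at this
  dsimp only [gammaSection]
  linarith

/-- The section `ι : [0,1] → Γ` of `γ` sends `r` to the compatible sequence whose
`n`-th entry is the largest element of `Γ_n` that approximates `r` from below
(the stabilizing approximation `q⌝` for rational `q`, the strict lower
approximation `r⌞` for irrational `r`, and the zero sequence for `0`); it
satisfies `γ ∘ ι = id` on `[0,1]`. -/
theorem gamma_retraction_section (r : ℝ) (h0 : 0 ≤ r) (h1 : r ≤ 1) :
    ∃ x : GammaLim,
      (∀ n : ℕ+, ((x.1 n : ℚ) : ℝ) ≤ r ∧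
        ∀ q ∈ GammaChain n, (q : ℝ) ≤ r → q ≤ x.1 n) ∧
      gammaEval x = r :=
  ⟨gammaSection r h0 h1, fun n => ⟨floorApprox_le r n, fun _ => le_floorApprox_of_mem r n⟩,
    gammaEval_gammaSection r h0 h1⟩
end
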